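/- arXiv:nlin/0604003 — 3 statements merged into one kernel-verified Lean document; each statement's English description precedes it below -/
import Mathlib

section
/- If τ satisfies the 2-BKP bilinear equation, then τ satisfies the one-component BKP bilinear equation in each sector: for independent families t', t, t̄, the constant term in z of e^{ξ(t'−t,z)}·τ(t'−2[z^{−1}], t̄)·τ(t+2[z^{−1}], t̄) equals τ(t', t̄)·τ(t, t̄) as an identity in ℂ[[t',t,t̄]]; and for independent families t, t̄', t̄, the constant term in z of e^{ξ(t̄'−t̄,z)}·τ(t, t̄'−2[z^{−1}])·τ(t, t̄+2[z^{−1}]) equals τ(t, t̄')·τ(t, t̄) as an identity in ℂ[[t,t̄',t̄]]. -/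
noncomputable section

/-- Multivariate power series over `ℂ` with variable set `σ`. -/
abbrev MPS (σ : Type) : Type := MvPowerSeries σ ℂ

/-- The partial derivative `∂/∂x_i` on multivariate power series, defined coefficientwise. -/
def pd {σ : Type} (i : σ) (f : MPS σ) : MPS σ :=
  fun m => ((m i + 1 : ℕ) : ℂ) * MvPowerSeries.coeff (m + Finsupp.single i 1) f

open scoped Classical in
/-- Renaming of variables (along an injective map this is the natural embedding of
power series rings). -/
def embed {σ σ' : Type} (f : σ → σ') (τ : MPS σ) : MPS σ' :=
  fun m => if h : ∃ m' : σ →₀ ℕ, Finsupp.mapDomain f m' = m then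
    MvPowerSeries.coeff h.choose τ else 0

/-- Coefficients `G_k` of `exp (Σ_{j≥1} a_j w^j A_j) = Σ_k G_k w^k` for a commuting family of
`ℂ`-linear operators, encoded via `M j = j • a_j • A_j` and the recursion
`(k+1) G_{k+1} = Σ_{j=1}^{k+1} M j ∘ G_{k+1-j}`. -/
def expC {V : Type} [AddCommMonoid V] [Module ℂ V] (M : ℕ → V → V) : ℕ → V → V
  | 0, τ => τ
  | (k+1), τ =>
      ((k + 1 : ℂ))⁻¹ • ∑ i ∈ (Finset.range (k+1)).attach,
        M (k + 1 - i.1) (expC M i.1 τ)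
termination_by k _ => k
decreasing_by exact Finset.mem_range.mp i.2

/-- Coefficients (as operators) of the shift `τ ↦ τ(t + c[w])`, i.e. of
`exp (Σ_{n≥0} (c w^{2n+1}/(2n+1)) ∂_{v n}) = Σ_k (shiftC c v k) w^k`, where `v n` is the
variable `t_{2n+1}` of the chosen family. -/
def shiftC {σ : Type} (c : ℂ) (v : ℕ → σ) : ℕ → MPS σ → MPS σ :=
  expC (fun j φ => if j % 2 = 1 then c • pd (v (j / 2)) φ else 0)

/-- Coefficients `q_k` of `e^{ξ(s,w)} = exp (Σ_{n≥0} s_n w^{2n+1}) = Σ_k q_k w^k`. -/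
def xiC {σ : Type} (s : ℕ → MPS σ) : ℕ → MPS σ :=
  fun k => expC (fun j φ => if j % 2 = 1 then (j : ℂ) • (s (j / 2) * φ) else 0) k 1

/-- Weighted degree of a monomial, for weights `d`. -/
def wt {σ : Type} (d : σ → ℕ) (m : σ →₀ ℕ) : ℕ := m.sum fun i e => e * d i

/-- The constant term in `z` of `(Σ_k q_k z^k) · (Σ_i a_i z^{-i}) · (Σ_j b_j z^{-j})`,
defined coefficientwise (each coefficient is a finite sum because `q_k` is
weighted-homogeneous of weight `k`). -/
def constTerm {σ : Type} (d : σ → ℕ) (q a b : ℕ → MPS σ) : MPS σ :=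
  fun m => ∑ k ∈ Finset.range (wt d m + 1),
    MvPowerSeries.coeff m (q k * ∑ i ∈ Finset.range (k+1), a i * b (k - i))

/-- Variable set of `T = ℂ[[t;t̄]]`: `(false, n) ↦ t_{2n+1}`, `(true, n) ↦ t̄_{2n+1}`. -/
abbrev σT : Type := Bool × ℕ

/-- Variable set of `ℂ[[t',t,t̄',t̄]]`: `(p, b, n)` is `t_{2n+1}`-type (`b = false`) or
`t̄_{2n+1}`-type (`b = true`), primed iff `p = true`. -/
abbrev σU : Type := Bool × Bool × ℕ

abbrev T : Type := MPS σT

/-- The embedding `τ(t,t̄) ↦ τ(t',t̄')`. -/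
def ιP : T → MPS σU := embed fun p => (true, p.1, p.2)

/-- The embedding `τ(t,t̄) ↦ τ(t,t̄)` into the big ring. -/
def ιO : T → MPS σU := embed fun p => (false, p.1, p.2)

/-- `t_{2n+1}` and `t̄_{2n+1}` have weight `2n+1`. -/
def dU : σU → ℕ := fun p => 2 * p.2.2 + 1

/-- `τ` satisfies the 2-BKP bilinear equation: the constant term in `z` of
`e^{ξ(t'−t,z)} τ(t'−2[z⁻¹], t̄') τ(t+2[z⁻¹], t̄)` equals the constant term in `z` of
`e^{ξ(t̄'−t̄,z)} τ(t', t̄'−2[z⁻¹]) τ(t, t̄+2[z⁻¹])`, in `ℂ[[t',t,t̄',t̄]]`. -/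
def BKP2 (τ : T) : Prop :=
  constTerm dU
    (xiC fun n => (MvPowerSeries.X (true, false, n) : MPS σU) -
      MvPowerSeries.X (false, false, n))
    (fun k => shiftC (-2) (fun n => ((true, false, n) : σU)) k (ιP τ))
    (fun k => shiftC 2 (fun n => ((false, false, n) : σU)) k (ιO τ))
  =
  constTerm dU
    (xiC fun n => (MvPowerSeries.X (true, true, n) : MPS σU) -
      MvPowerSeries.X (false, true, n))
    (fun k => shiftC (-2) (fun n => ((true, true, n) : σU)) k (ιP τ))
    (fun k => shiftC 2 (fun n => ((false, true, n) : σU)) k (ιO τ))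

/-- The ring of formal series in `λ⁻¹, μ⁻¹` (with finitely many positive powers of
`λ, μ`) with coefficients in `T`, realized as iterated Hahn/Laurent series:
the outer exponent is the power of `λ⁻¹`, the inner one the power of `μ⁻¹`. -/
abbrev W : Type := HahnSeries ℤ (HahnSeries ℤ T)

/-- `λ` as an element of `W`. -/
def lamW : W := HahnSeries.single (-1 : ℤ) 1

/-- `μ` as an element of `W`. -/
def muW : W := HahnSeries.C (HahnSeries.single (-1 : ℤ) (1 : T))

/-- A constant (independent of `λ, μ`) element of `W`. -/
def cW (x : T) : W := HahnSeries.C (HahnSeries.C x)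

/-- The series `Σ_{k≥0} a_k λ^{-k}` as an element of `W`. -/
def Wl (a : ℕ → T) : W :=
  HahnSeries.ofPowerSeries ℤ (HahnSeries ℤ T) (PowerSeries.mk fun k => HahnSeries.C (a k))

/-- The series `Σ_{l≥0} a_l μ^{-l}` as an element of `W`. -/
def Wm (a : ℕ → T) : W :=
  HahnSeries.C (HahnSeries.ofPowerSeries ℤ T (PowerSeries.mk a))

/-- The double series `Σ_{k,l≥0} a_{k,l} λ^{-k} μ^{-l}` as an element of `W`. -/
def Wlm (a : ℕ → ℕ → T) : W :=
  HahnSeries.ofPowerSeries ℤ (HahnSeries ℤ T)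
    (PowerSeries.mk fun k => HahnSeries.ofPowerSeries ℤ T (PowerSeries.mk (a k)))

/-- Coefficients of the shift `t ↦ t + 2[w]` (unbarred sector) on `T`. -/
def Gt : ℕ → T → T := shiftC 2 (fun n => ((false, n) : σT))

/-- Coefficients of the shift `t̄ ↦ t̄ + 2[w]` (barred sector) on `T`. -/
def Gb : ℕ → T → T := shiftC 2 (fun n => ((true, n) : σT))

/-- `∂_1 = ∂/∂t_1`. -/
def d1 : T → T := pd ((false, 0) : σT)

/-- `∂̄_1 = ∂/∂t̄_1`. -/
def db1 : T → T := pd ((true, 0) : σT)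

/-- Variable set of the three-family ring `ℂ[[t',t,t̄]]` (resp. `ℂ[[t,t̄',t̄]]`). -/
abbrev σ3 : Type := Fin 3 × ℕ

def d3 : σ3 → ℕ := fun p => 2 * p.2 + 1

/-- Embedding `τ(t,t̄) ↦ τ(t',t̄)` into `ℂ[[t',t,t̄]]` (families: `0 = t'`, `1 = t`, `2 = t̄`). -/
def j0 : T → MPS σ3 := embed fun p => (if p.1 then (2 : Fin 3) else 0, p.2)

/-- Embedding `τ(t,t̄) ↦ τ(t,t̄)` into `ℂ[[t',t,t̄]]` (families: `0 = t'`, `1 = t`, `2 = t̄`). -/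
def j1 : T → MPS σ3 := embed fun p => (if p.1 then (2 : Fin 3) else 1, p.2)

/-- Embedding `τ(t,t̄) ↦ τ(t,t̄')` into `ℂ[[t,t̄',t̄]]` (families: `0 = t̄'`, `1 = t`, `2 = t̄`). -/
def j0' : T → MPS σ3 := embed fun p => (if p.1 then (0 : Fin 3) else 1, p.2)

/-- Embedding `τ(t,t̄) ↦ τ(t,t̄)` into `ℂ[[t,t̄',t̄]]` (families: `0 = t̄'`, `1 = t`, `2 = t̄`). -/
def j1' : T → MPS σ3 := embed fun p => (if p.1 then (2 : Fin 3) else 1, p.2)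

/-!
Specialising the 2-BKP identity along the renaming `t̄' ↦ t̄` of variables (a ring homomorphism
of power series, as its fibres are finite) turns `e^{ξ(t̄'−t̄,z)}` into `1`, so the constant term
on the right collapses to its `z⁰` part `τ(t',t̄)·τ(t,t̄)`. No other variable is sent to `t'` or
`t`, so the renaming commutes with `∂/∂t'`, `∂/∂t` and hence with the shifts `t' − 2[z⁻¹]`,
`t + 2[z⁻¹]` on the left, which becomes the one-component BKP constant term. The barred sector
is the same argument with `t' ↦ t`.
-/

namespace BKP

open MvPowerSeries Filter Finsupp

section Exponential

variable {V V' : Type} [AddCommMonoid V] [Module ℂ V] [AddCommMonoid V'] [Module ℂ V']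

lemma expC_zero (M : ℕ → V → V) (φ : V) : expC M 0 φ = φ := by
  rw [expC]

lemma expC_succ (M : ℕ → V → V) (k : ℕ) (φ : V) :
    expC M (k + 1) φ =
      ((k + 1 : ℂ))⁻¹ • ∑ i ∈ (Finset.range (k + 1)).attach, M (k + 1 - i.1) (expC M i.1 φ) := by
  rw [expC]

theorem map_expC (L : V →ₗ[ℂ] V') {M : ℕ → V → V} {M' : ℕ → V' → V'}
    (h : ∀ j φ, L (M j φ) = M' j (L φ)) (k : ℕ) (φ : V) :
    L (expC M k φ) = expC M' k (L φ) := by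
  induction k using Nat.strong_induction_on with
  | _ k ih =>
    cases k with
    | zero => rw [expC_zero, expC_zero]
    | succ k =>
      rw [expC_succ, expC_succ, map_smul, map_sum]
      congr 1
      exact Finset.sum_congr rfl fun i _ => by rw [h, ih i.1 (Finset.mem_range.mp i.2)]

end Exponential

section Series

variable {σ : Type}

lemma shiftC_zero (c : ℂ) (v : ℕ → σ) (φ : MPS σ) : shiftC c v 0 φ = φ :=
  expC_zero _ _

lemma xiC_zero (s : ℕ → MPS σ) : xiC s 0 = 1 :=
  expC_zero _ _

lemma xiC_zero_succ (k : ℕ) : xiC (fun _ => (0 : MPS σ)) (k + 1) = 0 := by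
  rw [xiC, expC_succ]
  refine (congrArg _ (Finset.sum_eq_zero fun i _ => ?_)).trans (smul_zero _)
  split_ifs <;> simp

end Series

section Renaming

variable {σ σ' : Type}

lemma pd_eq_pderiv (i : σ) (φ : MPS σ) : pd i φ = pderiv ℂ i φ := by
  ext m
  rw [coeff_pderiv, mul_comm, ← Nat.cast_succ]
  rfl

theorem embed_eq_rename {f : σ → σ'} [TendstoCofinite f] (hf : Function.Injective f)
    (φ : MPS σ) : embed f φ = rename f φ := by
  classical
  ext m
  change (if h : ∃ m' : σ →₀ ℕ, mapDomain f m' = m then coeff h.choose φ else 0) = _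
  split_ifs with h
  · obtain ⟨m₀, rfl⟩ := id h
    rw [mapDomain_injective hf h.choose_spec]
    simpa [embDomain_eq_mapDomain] using (coeff_embDomain_rename ⟨f, hf⟩ φ m₀).symm
  · exact (coeff_rename_eq_zero f φ h).symm

lemma mapDomain_apply_of_fiber_eq {r : σ → σ'} {u : σ} (hu : ∀ u', r u' = r u → u' = u)
    (x : σ →₀ ℕ) : mapDomain r x (r u) = x u := by
  rw [mapDomain, Finsupp.sum_apply, Finsupp.sum, Finset.sum_eq_single u]
  · exact single_eq_same
  · exact fun b _ hb => single_eq_of_ne (fun h => hb (hu b h.symm))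
  · intro h
    rw [notMem_support_iff.mp h, single_zero, Finsupp.zero_apply]

lemma mem_fiber_toFinset {r : σ → σ'} [TendstoCofinite r] {x : σ →₀ ℕ} {m : σ' →₀ ℕ} :
    x ∈ (TendstoCofinite.finite_preimage_singleton (mapDomain r) m).toFinset ↔
      mapDomain r x = m := by
  simp

theorem pderiv_rename {R : Type} [CommSemiring R] {r : σ → σ'} [TendstoCofinite r] {u : σ}
    (hu : ∀ u', r u' = r u → u' = u) (φ : MvPowerSeries σ R) :
    pderiv R (r u) (rename r φ) = rename r (pderiv R u φ) := by
  have hfib : ∀ {x : σ →₀ ℕ} {m : σ' →₀ ℕ}, mapDomain r x = m → x u = m (r u) := by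
    rintro x m rfl
    exact (mapDomain_apply_of_fiber_eq hu x).symm
  ext m
  have hle : ∀ {y : σ →₀ ℕ}, mapDomain r y = m + single (r u) 1 → single u 1 ≤ y := by
    intro y hy
    rw [single_le_iff, hfib hy, Finsupp.add_apply, single_eq_same]
    omega
  simp only [coeff_pderiv, coeff_rename, Finset.sum_mul]
  symm
  refine Finset.sum_nbij' (· + single u 1) (· - single u 1) (fun x hx => ?_) (fun y hy => ?_)
    (fun x _ => add_tsub_cancel_right x _) (fun y hy => ?_) (fun x hx => ?_)
  · rw [mem_fiber_toFinset] at hx ⊢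
    rw [mapDomain_add, mapDomain_single, hx]
  · rw [mem_fiber_toFinset] at hy ⊢
    have hsplit := congrArg (mapDomain r) (tsub_add_cancel_of_le (hle hy))
    rw [mapDomain_add, mapDomain_single, hy] at hsplit
    exact add_right_cancel hsplit
  · rw [mem_fiber_toFinset] at hy
    exact tsub_add_cancel_of_le (hle hy)
  · rw [mem_fiber_toFinset] at hx
    rw [hfib hx]

variable {r : σ → σ'} [TendstoCofinite r]

theorem rename_shiftC {v : ℕ → σ} (hv : ∀ n u, r u = r (v n) → u = v n) (c : ℂ) (k : ℕ)
    (φ : MPS σ) : rename r (shiftC c v k φ) = shiftC c (r ∘ v) k (rename r φ) := by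
  refine map_expC (rename r).toLinearMap (fun j ψ => ?_) k φ
  split_ifs
  · simp only [AlgHom.toLinearMap_apply, map_smul, pd_eq_pderiv, Function.comp_apply,
      pderiv_rename (hv _)]
  · exact map_zero _

theorem map_xiC (f : MPS σ →ₐ[ℂ] MPS σ') (s : ℕ → MPS σ) (k : ℕ) :
    f (xiC s k) = xiC (fun n => f (s n)) k := by
  rw [xiC, xiC, ← map_one f]
  refine map_expC f.toLinearMap (fun j ψ => ?_) k 1
  split_ifs
  · simp only [AlgHom.toLinearMap_apply, map_smul, map_mul]
  · exact map_zero _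

end Renaming

section ConstantTerm

variable {σ σ' : Type}

lemma coeff_constTerm (d : σ → ℕ) (q a b : ℕ → MPS σ) (m : σ →₀ ℕ) :
    coeff m (constTerm d q a b) = ∑ k ∈ Finset.range (wt d m + 1),
      coeff m (q k * ∑ i ∈ Finset.range (k + 1), a i * b (k - i)) :=
  rfl

lemma wt_mapDomain (r : σ → σ') (d : σ' → ℕ) (m : σ →₀ ℕ) :
    wt d (mapDomain r m) = wt (d ∘ r) m :=
  sum_mapDomain_index (fun _ => zero_mul _) (fun _ _ _ => add_mul _ _ _)

theorem rename_constTerm {r : σ → σ'} [TendstoCofinite r] {d : σ → ℕ} {d' : σ' → ℕ}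
    (hd : d = d' ∘ r) (q a b : ℕ → MPS σ) :
    rename r (constTerm d q a b) =
      constTerm d' (fun k => rename r (q k)) (fun k => rename r (a k))
        (fun k => rename r (b k)) := by
  ext m
  have hwt : ∀ x ∈ (TendstoCofinite.finite_preimage_singleton (mapDomain r) m).toFinset,
      wt d x = wt d' m := by
    intro x hx
    rw [mem_fiber_toFinset] at hx
    rw [← hx, wt_mapDomain, hd]
  rw [coeff_rename, Finset.sum_congr rfl fun x hx => by rw [coeff_constTerm, hwt x hx],
    Finset.sum_comm, coeff_constTerm]
  refine Finset.sum_congr rfl fun k _ => ?_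
  simp only [← map_mul, ← map_sum, coeff_rename]

theorem constTerm_xiC_zero (d : σ → ℕ) (a b : ℕ → MPS σ) :
    constTerm d (xiC fun _ => 0) a b = a 0 * b 0 := by
  ext m
  rw [coeff_constTerm, Finset.sum_eq_single 0]
  · rw [xiC_zero, one_mul, Finset.sum_range_one]
  · rintro (_ | k) _ hk
    · exact absurd rfl hk
    · rw [xiC_zero_succ, zero_mul, map_zero]
  · exact fun h => absurd (Finset.mem_range.mpr (Nat.succ_pos _)) h

end ConstantTerm

section Sectors

def toPrimed : σT → σU := fun p => (true, p.1, p.2)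

def toUnprimed : σT → σU := fun p => (false, p.1, p.2)

lemma toPrimed_injective : Function.Injective toPrimed := by
  intro p q h
  simpa [toPrimed, Prod.ext_iff] using h

lemma toUnprimed_injective : Function.Injective toUnprimed := by
  intro p q h
  simpa [toUnprimed, Prod.ext_iff] using h

instance : TendstoCofinite toPrimed := tendstoCofinite_of_injective toPrimed_injective

instance : TendstoCofinite toUnprimed := tendstoCofinite_of_injective toUnprimed_injective

lemma ιP_eq_rename (τ : T) : ιP τ = rename toPrimed τ := embed_eq_rename toPrimed_injective τ

lemma ιO_eq_rename (τ : T) : ιO τ = rename toUnprimed τ := embed_eq_rename toUnprimed_injective τ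

def bkpSide (τ : T) (b : Bool) : MPS σU :=
  constTerm dU (xiC fun n => (X (true, b, n) : MPS σU) - X (false, b, n))
    (fun k => shiftC (-2) (fun n => ((true, b, n) : σU)) k (ιP τ))
    (fun k => shiftC 2 (fun n => ((false, b, n) : σU)) k (ιO τ))

lemma bkp2_iff (τ : T) : BKP2 τ ↔ bkpSide τ false = bkpSide τ true := Iff.rfl

variable {σ' : Type} (r : σU → σ') [TendstoCofinite r] {d : σ' → ℕ}

theorem rename_bkpSide (hd : dU = d ∘ r) {b : Bool}
    (hb : ∀ p n u, r u = r (p, b, n) → u = (p, b, n)) (τ : T) :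
    rename r (bkpSide τ b) =
      constTerm d (xiC fun n => (X (r (true, b, n)) : MPS σ') - X (r (false, b, n)))
        (fun k => shiftC (-2) (fun n => r (true, b, n)) k (rename (r ∘ toPrimed) τ))
        (fun k => shiftC 2 (fun n => r (false, b, n)) k (rename (r ∘ toUnprimed) τ)) := by
  rw [bkpSide, rename_constTerm hd]
  congr 1
  · funext k
    simp only [map_xiC, map_sub, rename_X]
  · funext k
    rw [rename_shiftC (fun n => hb true n), ιP_eq_rename, rename_rename]
    rfl
  · funext k
    rw [rename_shiftC (fun n => hb false n), ιO_eq_rename, rename_rename]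
    rfl

theorem rename_bkpSide_of_collapse (hd : dU = d ∘ r) {b : Bool}
    (hb : ∀ n, r (true, b, n) = r (false, b, n)) (τ : T) :
    rename r (bkpSide τ b) = rename (r ∘ toPrimed) τ * rename (r ∘ toUnprimed) τ := by
  have hξ : (fun n => (rename r (X (true, b, n) - X (false, b, n)) : MPS σ')) = fun _ => 0 := by
    funext n
    rw [map_sub, rename_X, rename_X, hb, sub_self]
  rw [bkpSide, rename_constTerm hd]
  simp only [map_xiC, hξ, constTerm_xiC_zero, shiftC_zero, ιP_eq_rename, ιO_eq_rename,
    rename_rename]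

theorem constTerm_eq_of_bkpSide_eq (hd : dU = d ∘ r) {b b' : Bool}
    (hb : ∀ p n u, r u = r (p, b, n) → u = (p, b, n))
    (hb' : ∀ n, r (true, b', n) = r (false, b', n)) {τ : T} (h : bkpSide τ b = bkpSide τ b') :
    constTerm d (xiC fun n => (X (r (true, b, n)) : MPS σ') - X (r (false, b, n)))
        (fun k => shiftC (-2) (fun n => r (true, b, n)) k (rename (r ∘ toPrimed) τ))
        (fun k => shiftC 2 (fun n => r (false, b, n)) k (rename (r ∘ toUnprimed) τ)) =
      rename (r ∘ toPrimed) τ * rename (r ∘ toUnprimed) τ := by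
  rw [← rename_bkpSide r hd hb, h, rename_bkpSide_of_collapse r hd hb']

end Sectors

lemma tendstoCofinite_of_snd_eq {β : Type} {r : σU → β × ℕ} (hr : ∀ u, (r u).2 = u.2.2) :
    TendstoCofinite r := by
  refine (tendstoCofinite_iff_finite_preimage_singleton r).mpr fun j => ?_
  refine (Set.finite_range fun pb : Bool × Bool => ((pb.1, pb.2, j.2) : σU)).subset ?_
  rintro ⟨p, b, n⟩ hu
  have hu : r (p, b, n) = j := hu
  exact ⟨(p, b), by rw [← hu, hr]⟩

def mergeBarred : σU → σ3 := fun u => (if u.2.1 then 2 else if u.1 then 0 else 1, u.2.2)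

def mergeUnbarred : σU → σ3 := fun u => (if u.2.1 then (if u.1 then 0 else 2) else 1, u.2.2)

instance : TendstoCofinite mergeBarred := tendstoCofinite_of_snd_eq fun _ => rfl

instance : TendstoCofinite mergeUnbarred := tendstoCofinite_of_snd_eq fun _ => rfl

lemma j0_eq_rename (τ : T) : j0 τ = rename (mergeBarred ∘ toPrimed) τ :=
  embed_eq_rename (f := mergeBarred ∘ toPrimed)
    (by rintro ⟨_ | _, m⟩ ⟨_ | _, n⟩ h <;> simp_all [mergeBarred, toPrimed]) τ

lemma j1_eq_rename (τ : T) : j1 τ = rename (mergeBarred ∘ toUnprimed) τ :=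
  embed_eq_rename (f := mergeBarred ∘ toUnprimed)
    (by rintro ⟨_ | _, m⟩ ⟨_ | _, n⟩ h <;> simp_all [mergeBarred, toUnprimed]) τ

lemma j0'_eq_rename (τ : T) : j0' τ = rename (mergeUnbarred ∘ toPrimed) τ :=
  embed_eq_rename (f := mergeUnbarred ∘ toPrimed)
    (by rintro ⟨_ | _, m⟩ ⟨_ | _, n⟩ h <;> simp_all [mergeUnbarred, toPrimed]) τ

lemma j1'_eq_rename (τ : T) : j1' τ = rename (mergeUnbarred ∘ toUnprimed) τ :=
  embed_eq_rename (f := mergeUnbarred ∘ toUnprimed)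
    (by rintro ⟨_ | _, m⟩ ⟨_ | _, n⟩ h <;> simp_all [mergeUnbarred, toUnprimed]) τ

end BKP

open BKP in
theorem stmt5 (τ : T) (hτ : BKP2 τ) :
    (constTerm d3
        (xiC fun n => (MvPowerSeries.X ((0 : Fin 3), n) : MPS σ3) -
          MvPowerSeries.X ((1 : Fin 3), n))
        (fun k => shiftC (-2) (fun n => (((0 : Fin 3), n) : σ3)) k (j0 τ))
        (fun k => shiftC 2 (fun n => (((1 : Fin 3), n) : σ3)) k (j1 τ))
      = j0 τ * j1 τ) ∧
    (constTerm d3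
        (xiC fun n => (MvPowerSeries.X ((0 : Fin 3), n) : MPS σ3) -
          MvPowerSeries.X ((2 : Fin 3), n))
        (fun k => shiftC (-2) (fun n => (((0 : Fin 3), n) : σ3)) k (j0' τ))
        (fun k => shiftC 2 (fun n => (((2 : Fin 3), n) : σ3)) k (j1' τ))
      = j0' τ * j1' τ) := by
  have h := (bkp2_iff τ).mp hτ
  rw [j0_eq_rename, j1_eq_rename, j0'_eq_rename, j1'_eq_rename]
  refine ⟨constTerm_eq_of_bkpSide_eq mergeBarred (d := d3) (b := false) rfl ?_ (fun _ => rfl) h,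
    constTerm_eq_of_bkpSide_eq mergeUnbarred (d := d3) (b := true) rfl ?_ (fun _ => rfl) h.symm⟩
  · rintro (_ | _) n ⟨_ | _, _ | _, n'⟩ h <;> simp_all [mergeBarred]
  · rintro (_ | _) n ⟨_ | _, _ | _, n'⟩ h <;> simp_all [mergeUnbarred]

end
end

section
/- If p is odd, then the odd-index Faber polynomials of p have the generating function log((p(z)−w)/z) − log((p(z)+w)/z) = −Σ_{n≥0} (2z^{−2n−1}/(2n+1)) Φ_{2n+1}(w), as an identity in R[w][[z^{−1}]] (informally, log((p(z)−w)/(p(z)+w)) = −Σ_{n≥0} (2z^{−2n−1}/(2n+1)) Φ_{2n+1}(w)). -/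
noncomputable section

/-- The series `h ∈ R[w][[z⁻¹]]` with `(p(z) − w)/z = 1 + h`, for
`p(z) = z + Σ_{j≥1} c_j z^{−j}`; the power series variable is `u = z⁻¹`. -/
def hSer {R : Type*} [CommRing R] (c : ℕ → R) : PowerSeries (Polynomial R) :=
  PowerSeries.mk fun k =>
    if k = 0 then 0 else if k = 1 then -Polynomial.X else Polynomial.C (c (k - 1))

/-- The series `h' ∈ R[w][[z⁻¹]]` with `(p(z) + w)/z = 1 + h'`. -/
def hSerP {R : Type*} [CommRing R] (c : ℕ → R) : PowerSeries (Polynomial R) :=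
  PowerSeries.mk fun k =>
    if k = 0 then 0 else if k = 1 then Polynomial.X else Polynomial.C (c (k - 1))

/-- `log (1 + h) = Σ_{k≥1} (−1)^{k−1} h^k / k`, defined coefficientwise (the coefficient of
`u^m` only receives contributions from `k ≤ m` when `h` has zero constant term). -/
def logOneAdd {A : Type*} [CommRing A] [Algebra ℚ A] (h : PowerSeries A) : PowerSeries A :=
  PowerSeries.mk fun m =>
    ∑ k ∈ Finset.Icc 1 m, ((-1 : ℚ) ^ (k - 1) * (k : ℚ)⁻¹) • PowerSeries.coeff m (h ^ k)

/-- `Φ` is the family of Faber polynomials of `p(z) = z + Σ_{j≥1} c_j z^{−j}`, i.e.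
`log ((p(z) − w)/z) = − Σ_{n≥1} (z^{−n}/n) Φ_n(w)` in `R[w][[z⁻¹]]`. -/
def FaberRel {R : Type*} [CommRing R] [Algebra ℚ R] (c : ℕ → R) (Φ : ℕ → Polynomial R) : Prop :=
  logOneAdd (hSer c) = PowerSeries.mk fun n => if n = 0 then 0 else (-(n : ℚ)⁻¹) • Φ n

/-! Since `p` is odd, `(p(z) + w)/z` arises from `(p(z) − w)/z` by the substitution `z ↦ −z`,
i.e. by rescaling the series in `u = z⁻¹` by `−1`. The logarithm commutes with rescaling, so
subtracting the two logarithms doubles the odd coefficients of the Faber expansion and cancels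
the even ones. -/

theorem logOneAdd_rescale {A : Type*} [CommRing A] [Algebra ℚ A] (a : A) (h : PowerSeries A) :
    logOneAdd (PowerSeries.rescale a h) = PowerSeries.rescale a (logOneAdd h) := by
  ext m
  simp only [logOneAdd, PowerSeries.coeff_rescale, PowerSeries.coeff_mk, ← map_pow,
    Finset.mul_sum, mul_smul_comm]

theorem PowerSeries.coeff_sub_rescale_neg_one {A : Type*} [CommRing A] (f : PowerSeries A)
    (m : ℕ) :
    coeff m (f - rescale (-1) f) = if Odd m then 2 * coeff m f else 0 := by
  rw [map_sub, coeff_rescale]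
  split_ifs with hm
  · rw [hm.neg_one_pow]
    ring
  · rw [(Nat.not_odd_iff_even.mp hm).neg_one_pow, one_mul, sub_self]

theorem hSerP_eq_rescale_hSer {R : Type*} [CommRing R] {c : ℕ → R}
    (hodd : ∀ j, 1 ≤ j → j % 2 = 0 → c j = 0) :
    hSerP c = PowerSeries.rescale (-1) (hSer c) := by
  ext k
  rw [PowerSeries.coeff_rescale]
  simp only [hSer, hSerP, PowerSeries.coeff_mk]
  match k with
  | 0 => simp
  | 1 => simp
  | k + 2 =>
    simp only [show k + 2 - 1 = k + 1 by omega, add_eq_zero, OfNat.ofNat_ne_zero, and_false,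
      show k + 2 ≠ 1 by omega, if_false]
    by_cases hk : (k + 1) % 2 = 0
    · simp [hodd (k + 1) (by omega) hk]
    · rw [Even.neg_one_pow (by rw [Nat.even_iff]; omega), one_mul]

theorem stmt7 {R : Type*} [CommRing R] [Algebra ℚ R] (c : ℕ → R) (Φ : ℕ → Polynomial R)
    (hΦ : FaberRel c Φ) (hodd : ∀ j, 1 ≤ j → j % 2 = 0 → c j = 0) :
    logOneAdd (hSer c) - logOneAdd (hSerP c)
      = PowerSeries.mk fun m =>
          if m % 2 = 1 then ((-2 : ℚ) * (m : ℚ)⁻¹) • Φ m else 0 := by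
  ext m : 1
  rw [hSerP_eq_rescale_hSer hodd, logOneAdd_rescale, PowerSeries.coeff_sub_rescale_neg_one, hΦ]
  simp only [Nat.odd_iff, PowerSeries.coeff_mk]
  split_ifs with hm hm0
  · omega
  · rw [show (-2 : ℚ) * (m : ℚ)⁻¹ = 2 * -(m : ℚ)⁻¹ by ring, mul_smul, two_smul, two_mul]
  · rfl

end
end

section
/- Faber polynomials are the polynomial parts of powers of the inverse function: suppose L(w) = w + Σ_{j≥1} a_j w^{−j} ∈ R((w^{−1})) is a compositional inverse of p at infinity, i.e. p(L(w)) = w, where p(L(w)) := L(w) + Σ_{j≥1} c_j·L(w)^{−j} (this series is well defined coefficientwise, since L(w)^{−j} involves only powers w^{−j} and lower). Then for every n ≥ 1, the difference L(w)^n − Φ_n(w) involves only strictly negative powers of w; equivalently, Φ_n(w) equals the polynomial part (the sum of the terms of nonnegative degree) of L(w)^n. -/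
noncomputable section

namespace FaberAux

open HahnSeries

variable {R : Type*} [CommRing R]

lemma mul_coeff_eq_zero {x y : HahnSeries ℤ R} {a b k : ℤ}
    (hx : ∀ i < a, x.coeff i = 0) (hy : ∀ i < b, y.coeff i = 0) (hk : k < a + b) :
    (x * y).coeff k = 0 := by
  rw [HahnSeries.coeff_mul]
  refine Finset.sum_eq_zero fun ij hij => ?_
  rw [Finset.mem_addAntidiagonal] at hij
  rcases lt_or_ge ij.1 a with h | h
  · rw [hx _ h, zero_mul]
  · rw [hy, mul_zero]
    have := hij.2.2
    linarith

lemma mul_coeff_corner {x y : HahnSeries ℤ R} {a b : ℤ}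
    (hx : ∀ i < a, x.coeff i = 0) (hy : ∀ i < b, y.coeff i = 0) :
    (x * y).coeff (a + b) = x.coeff a * y.coeff b := by
  rw [HahnSeries.coeff_mul]
  apply Finset.sum_eq_single (a, b)
  · intro ij hij hne
    rw [Finset.mem_addAntidiagonal] at hij
    rcases lt_trichotomy ij.1 a with h | h | h
    · rw [hx _ h, zero_mul]
    · exact absurd (Prod.ext h (by have := hij.2.2; omega)) hne
    · rw [hy, mul_zero]
      have := hij.2.2
      linarith
  · intro h
    by_cases hxa : x.coeff a = 0
    · rw [hxa, zero_mul]
    by_cases hyb : y.coeff b = 0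
    · rw [hyb, mul_zero]
    exact absurd (Finset.mem_addAntidiagonal.mpr
      ⟨(HahnSeries.mem_support x a).mpr hxa, (HahnSeries.mem_support y b).mpr hyb, rfl⟩) h

lemma coeff_sum {ι : Type*} (s : Finset ι) (f : ι → HahnSeries ℤ R) (k : ℤ) :
    (∑ i ∈ s, f i).coeff k = ∑ i ∈ s, (f i).coeff k := by
  classical
  induction s using Finset.cons_induction with
  | empty => simp
  | cons i s his ih => rw [Finset.sum_cons, Finset.sum_cons, HahnSeries.coeff_add, ih]

lemma nsmul_coeff (n : ℕ) (x : HahnSeries ℤ R) (k : ℤ) : (n • x).coeff k = n • x.coeff k := by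
  induction n with
  | zero => simp
  | succ n ih => rw [succ_nsmul, succ_nsmul, HahnSeries.coeff_add, ih]

/-- Euler operator: multiplies coefficient of exponent `k` by `k`. -/
def euler (x : HahnSeries ℤ R) : HahnSeries ℤ R :=
  ⟨fun k => k • x.coeff k, x.isPWO_support.mono (by
    intro k hk
    simp only [Function.mem_support, ne_eq] at hk
    rw [HahnSeries.mem_support]
    intro h
    exact hk (by rw [h, smul_zero]))⟩

lemma euler_coeff (x : HahnSeries ℤ R) (k : ℤ) : (euler x).coeff k = k • x.coeff k := rfl

lemma euler_support (x : HahnSeries ℤ R) : (euler x).support ⊆ x.support := by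
  intro k hk
  rw [HahnSeries.mem_support] at hk ⊢
  intro h
  exact hk (by rw [euler_coeff, h, smul_zero])

lemma euler_mul (x y : HahnSeries ℤ R) : euler (x * y) = euler x * y + x * euler y := by
  ext k
  rw [HahnSeries.coeff_add, euler_coeff,
    HahnSeries.coeff_mul_left' x.isPWO_support (euler_support x),
    HahnSeries.coeff_mul_right' y.isPWO_support (euler_support y),
    HahnSeries.coeff_mul, Finset.smul_sum, ← Finset.sum_add_distrib]
  refine Finset.sum_congr rfl fun ij hij => ?_
  rw [Finset.mem_addAntidiagonal] at hij
  rw [euler_coeff, euler_coeff, ← hij.2.2, add_smul, smul_mul_assoc, mul_smul_comm]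

/-- Formal derivative with respect to `w`, where exponent `k` represents `w^(-k)`. -/
def deriv (x : HahnSeries ℤ R) : HahnSeries ℤ R :=
  -(HahnSeries.single (1 : ℤ) (1 : R) * euler x)

lemma deriv_coeff (x : HahnSeries ℤ R) (k : ℤ) :
    (deriv x).coeff k = -((k - 1) • x.coeff (k - 1)) := by
  have h : k = (k - 1) + 1 := by ring
  rw [deriv, HahnSeries.coeff_neg]
  conv_lhs => rw [h]
  rw [HahnSeries.coeff_single_mul_add, one_mul, euler_coeff]

lemma euler_one : euler (1 : HahnSeries ℤ R) = 0 := by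
  ext k
  rw [euler_coeff]
  rcases eq_or_ne k 0 with h | h
  · simp [h]
  · simp [HahnSeries.coeff_one, h]

lemma deriv_one : deriv (1 : HahnSeries ℤ R) = 0 := by
  rw [deriv, euler_one, mul_zero, neg_zero]

lemma deriv_mul (x y : HahnSeries ℤ R) : deriv (x * y) = deriv x * y + x * deriv y := by
  unfold deriv
  rw [euler_mul]
  ring

lemma deriv_coeff_one (x : HahnSeries ℤ R) : (deriv x).coeff 1 = 0 := by
  rw [deriv_coeff]
  norm_num

lemma deriv_pow (x : HahnSeries ℤ R) (n : ℕ) :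
    deriv (x ^ (n + 1)) = (n + 1) • (x ^ n * deriv x) := by
  induction n with
  | zero => simp
  | succ n ih =>
    rw [pow_succ, deriv_mul, ih, smul_mul_assoc]
    have h1 : x ^ n * deriv x * x = x ^ (n + 1) * deriv x := by ring
    have h2 : x ^ (n + 1) * deriv x = x ^ (n + 1) * deriv x := rfl
    rw [h1, succ_nsmul ((x ^ (n+1)) * deriv x) (n+1)]

lemma nsmul_cancel [Algebra ℚ R] {n : ℕ} (hn : 0 < n) {r : R} (h : n • r = 0) : r = 0 := by
  have h2 : ((n : ℚ)⁻¹ • (n • r)) = r := by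
    rw [← Nat.cast_smul_eq_nsmul ℚ n r, smul_smul, inv_mul_cancel₀ (by positivity), one_smul]
  rw [h, smul_zero] at h2
  exact h2.symm

section PS

open PowerSeries

variable {A : Type*} [CommRing A] [Algebra ℚ A]

lemma ps_coeff_pow_zero {h : PowerSeries A} (h0 : PowerSeries.constantCoeff h = 0)
    {k m : ℕ} (hmk : m < k) : PowerSeries.coeff m (h ^ k) = 0 :=
  PowerSeries.X_pow_dvd_iff.mp (pow_dvd_pow_of_dvd (PowerSeries.X_dvd_iff.mpr h0) k) m hmk

lemma ps_coeff_mul_congr {u v : PowerSeries A} (g : PowerSeries A) {m : ℕ}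
    (h : ∀ j ≤ m, PowerSeries.coeff j u = PowerSeries.coeff j v) :
    PowerSeries.coeff m (g * u) = PowerSeries.coeff m (g * v) := by
  rw [PowerSeries.coeff_mul, PowerSeries.coeff_mul]
  refine Finset.sum_congr rfl fun ij hij => ?_
  rw [Finset.HasAntidiagonal.mem_antidiagonal] at hij
  rw [h ij.2 (by omega)]

lemma ps_coeff_pow_mul_zero {h : PowerSeries A} (h0 : PowerSeries.constantCoeff h = 0)
    (g : PowerSeries A) {m K : ℕ} (hmK : m < K) : PowerSeries.coeff m (h ^ K * g) = 0 := by
  rw [PowerSeries.coeff_mul]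
  refine Finset.sum_eq_zero fun ij hij => ?_
  rw [Finset.HasAntidiagonal.mem_antidiagonal] at hij
  rw [ps_coeff_pow_zero h0 (show ij.1 < K by omega), zero_mul]

lemma telescope {M : Type*} [AddCommGroup M] (g : ℕ → M) (K : ℕ) :
    ∑ k ∈ Finset.Icc 1 K, (g (k - 1) - g k) = g 0 - g K := by
  induction K with
  | zero => simp
  | succ K ih =>
    rw [Finset.sum_Icc_succ_top (by omega : 1 ≤ K + 1), ih]
    simp only [Nat.add_sub_cancel]
    abel

lemma log_deriv (h : PowerSeries A) (h0 : PowerSeries.constantCoeff h = 0) :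
    (1 + h) * (PowerSeries.derivative A (logOneAdd h)) = PowerSeries.derivative A h := by
  ext m
  set K := m + 1 with hK
  set F : PowerSeries A := ∑ k ∈ Finset.Icc 1 K,
    ((-1 : ℚ) ^ (k - 1) * (k : ℚ)⁻¹) • (PowerSeries.derivative A (h ^ k)) with hF
  have step1 : ∀ j ≤ m, PowerSeries.coeff j (PowerSeries.derivative A (logOneAdd h))
      = PowerSeries.coeff j F := by
    intro j hj
    have hsub : Finset.Icc 1 (j + 1) ⊆ Finset.Icc 1 K := by
      apply Finset.Icc_subset_Icc_right; omega
    rw [PowerSeries.coeff_derivative, logOneAdd, PowerSeries.coeff_mk, Finset.sum_mul,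
      Finset.sum_subset hsub (fun k hk hk2 => by
        rw [ps_coeff_pow_zero h0 (by simp only [Finset.mem_Icc] at hk hk2; omega),
          smul_zero, zero_mul]),
      hF, map_sum]
    refine Finset.sum_congr rfl fun k hk => ?_
    rw [PowerSeries.coeff_smul, PowerSeries.coeff_derivative, smul_mul_assoc]
  have e1 : PowerSeries.coeff m ((1 + h) * PowerSeries.derivative A (logOneAdd h))
      = PowerSeries.coeff m ((1 + h) * F) := ps_coeff_mul_congr _ step1
  have step2 : (1 + h) * F
      = PowerSeries.derivative A h + ((-1 : ℚ) ^ m) • (h ^ K * PowerSeries.derivative A h) := by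
    rw [hF, Finset.mul_sum]
    have e2 : ∀ k ∈ Finset.Icc 1 K,
        (1 + h) * (((-1 : ℚ) ^ (k - 1) * (k : ℚ)⁻¹) • (PowerSeries.derivative A (h ^ k)))
        = ((((-1 : ℚ) ^ (k - 1)) • ((1 + h) * h ^ (k - 1)))) * PowerSeries.derivative A h := by
      intro k hk
      simp only [Finset.mem_Icc] at hk
      obtain ⟨j, rfl⟩ : ∃ j, k = j + 1 := ⟨k - 1, by omega⟩
      rw [Derivation.leibniz_pow]
      simp only [Nat.add_sub_cancel, smul_eq_mul]
      rw [mul_smul_comm, mul_smul_comm, ← Nat.cast_smul_eq_nsmul ℚ (j + 1), smul_smul]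
      have hsc : (-1 : ℚ) ^ j * (↑(j + 1))⁻¹ * (↑(j + 1)) = (-1 : ℚ) ^ j := by
        have hne : ((j + 1 : ℕ) : ℚ) ≠ 0 := by positivity
        field_simp
      rw [hsc, smul_mul_assoc, mul_assoc]
    rw [Finset.sum_congr rfl e2, ← Finset.sum_mul]
    have e4 : ∀ k ∈ Finset.Icc 1 K, (((-1 : ℚ) ^ (k - 1)) • ((1 + h) * h ^ (k - 1)))
        = (fun j => ((-1 : ℚ) ^ j) • h ^ j) (k - 1) - (fun j => ((-1 : ℚ) ^ j) • h ^ j) k := by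
      intro k hk
      simp only [Finset.mem_Icc] at hk
      obtain ⟨j, rfl⟩ : ∃ j, k = j + 1 := ⟨k - 1, by omega⟩
      simp only [Nat.add_sub_cancel]
      have hneg : (-1 : ℚ) ^ (j + 1) • h ^ (j + 1) = -((-1 : ℚ) ^ j • h ^ (j + 1)) := by
        rw [pow_succ, mul_comm ((-1 : ℚ) ^ j) (-1), mul_smul]
        simp
      rw [hneg, sub_neg_eq_add, ← smul_add]
      congr 1
      ring
    rw [Finset.sum_congr rfl e4, telescope (fun j => ((-1 : ℚ) ^ j) • h ^ j) K]
    simp only [pow_zero, one_smul]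
    have hKm : ((-1 : ℚ) ^ K) • (h ^ K) = -(((-1 : ℚ) ^ m) • h ^ K) := by
      rw [hK, pow_succ, mul_comm ((-1 : ℚ) ^ m) (-1), mul_smul]
      simp
    rw [hKm, sub_neg_eq_add, add_mul, one_mul, smul_mul_assoc]
  rw [e1, step2, map_add, PowerSeries.coeff_smul, ps_coeff_pow_mul_zero h0 _ (by omega : m < K),
    smul_zero, add_zero]

end PS

section Extract

variable {R : Type*} [CommRing R] [Algebra ℚ R] {c : ℕ → R} {Φ : ℕ → Polynomial R}

lemma hSer_const : PowerSeries.constantCoeff (hSer c) = 0 := by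
  rw [← PowerSeries.coeff_zero_eq_constantCoeff_apply, hSer, PowerSeries.coeff_mk]
  simp

lemma hSer_coeff_zero : PowerSeries.coeff 0 (hSer c) = 0 := by
  rw [hSer, PowerSeries.coeff_mk]; simp

lemma hSer_coeff_one : PowerSeries.coeff 1 (hSer c) = -Polynomial.X := by
  rw [hSer, PowerSeries.coeff_mk]; simp

lemma hSer_coeff_ge {i : ℕ} (hi : 2 ≤ i) :
    PowerSeries.coeff i (hSer c) = Polynomial.C (c (i - 1)) := by
  rw [hSer, PowerSeries.coeff_mk, if_neg (by omega), if_neg (by omega)]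

lemma dlog_coeff (hΦ : FaberRel c Φ) (j : ℕ) :
    PowerSeries.coeff j
      (PowerSeries.derivative (Polynomial R) (logOneAdd (hSer c))) = -(Φ (j + 1)) := by
  rw [FaberRel] at hΦ
  rw [PowerSeries.coeff_derivative, hΦ, PowerSeries.coeff_mk, if_neg (Nat.succ_ne_zero j)]
  have hc : ((j : Polynomial R) + 1) = ((j + 1 : ℕ) : Polynomial R) := by push_cast; ring
  rw [hc, mul_comm, ← nsmul_eq_mul, ← Nat.cast_smul_eq_nsmul ℚ, smul_smul]
  have hs : (((j + 1 : ℕ) : ℚ)) * (-((j + 1 : ℕ) : ℚ)⁻¹) = -1 := by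
    have : ((j + 1 : ℕ) : ℚ) ≠ 0 := by positivity
    field_simp
  rw [hs, neg_one_smul]

lemma faber_one (hΦ : FaberRel c Φ) : Φ 1 = Polynomial.X := by
  have key := congrArg (PowerSeries.coeff 0) (log_deriv (hSer c) hSer_const)
  rw [PowerSeries.coeff_mul] at key
  rw [Finset.HasAntidiagonal.antidiagonal_zero, Finset.sum_singleton] at key
  rw [dlog_coeff hΦ, PowerSeries.coeff_derivative, hSer_coeff_one] at key
  rw [map_add, PowerSeries.coeff_one, hSer_coeff_zero] at key
  simpa using key

lemma faber_rec (hΦ : FaberRel c Φ) (n : ℕ) (hn : 1 ≤ n) :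
    Φ (n + 1) = Polynomial.X * Φ n
      - (∑ j ∈ Finset.Icc 1 (n - 1), Polynomial.C (c j) * Φ (n - j))
      - (n + 1) • Polynomial.C (c n) := by
  obtain ⟨N, rfl⟩ : ∃ N, n = N + 1 := ⟨n - 1, by omega⟩
  have key := congrArg (PowerSeries.coeff (N + 1)) (log_deriv (hSer c) hSer_const)
  rw [PowerSeries.coeff_mul] at key
  rw [Finset.Nat.sum_antidiagonal_eq_sum_range_succ_mk] at key
  rw [Finset.sum_range_succ', Finset.sum_range_succ'] at key
  simp only [dlog_coeff hΦ] at key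
  rw [PowerSeries.coeff_derivative, hSer_coeff_ge (by omega : 2 ≤ N + 1 + 1)] at key
  have c0 : PowerSeries.coeff 0 (1 + hSer c) = 1 := by
    rw [map_add, PowerSeries.coeff_one, hSer_coeff_zero]; simp
  have c1 : PowerSeries.coeff 1 (1 + hSer c) = -Polynomial.X := by
    rw [map_add, PowerSeries.coeff_one, hSer_coeff_one]; simp
  have cge : ∀ i, PowerSeries.coeff (i + 1 + 1) (1 + hSer c)
      = Polynomial.C (c (i + 1)) := by
    intro i
    rw [map_add, PowerSeries.coeff_one, hSer_coeff_ge (by omega)]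
    simp
  rw [c0, c1] at key
  simp only [cge] at key
  have hidx1 : N + 1 - 0 + 1 = N + 1 + 1 := by omega
  have hidx2 : N + 1 - 1 + 1 = N + 1 := by omega
  rw [hidx1, hidx2] at key
  have hsum : (∑ j ∈ Finset.Icc 1 (N + 1 - 1), Polynomial.C (c j) * Φ (N + 1 - j))
      = ∑ i ∈ Finset.range N, Polynomial.C (c (1 + i)) * Φ (N + 1 - (1 + i)) := by
    have : N + 1 - 1 = N := by omega
    rw [this, ← Finset.Ico_add_one_right_eq_Icc, Finset.sum_Ico_eq_sum_range]
    simp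
  have hsum2 : ∀ i ∈ Finset.range N,
      Polynomial.C (c (i + 1)) * -Φ (N + 1 - (i + 1 + 1) + 1)
      = -(Polynomial.C (c (1 + i)) * Φ (N + 1 - (1 + i))) := by
    intro i hi
    rw [Finset.mem_range] at hi
    have h1 : N + 1 - (i + 1 + 1) + 1 = N + 1 - (1 + i) := by omega
    have h2 : 1 + i = i + 1 := by omega
    rw [h1, h2]
    ring
  rw [Finset.sum_congr rfl hsum2, Finset.sum_neg_distrib] at key
  rw [hsum]
  have hcast : ((N + 1 + 1) • Polynomial.C (c (N + 1)))
      = Polynomial.C (c (N + 1 + 1 - 1)) * (((N + 1 : ℕ) : Polynomial R) + 1) := by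
    have h3 : N + 1 + 1 - 1 = N + 1 := by omega
    rw [h3, nsmul_eq_mul, mul_comm]
    push_cast
    ring
  rw [hcast]
  linear_combination -key

end Extract

section Hahn

variable {R : Type*} [CommRing R] [Algebra ℚ R] {c : ℕ → R} {L Linv : HahnSeries ℤ R}

lemma L_coeff_le (hcomp : ∀ k : ℤ,
      L.coeff k + ∑ j ∈ Finset.Icc 1 k.toNat, c j * (Linv ^ j).coeff k
        = (HahnSeries.single (-1 : ℤ) (1 : R)).coeff k) {k : ℤ} (hk : k ≤ 0) :
    L.coeff k = (HahnSeries.single (-1 : ℤ) (1 : R)).coeff k := by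
  have h := hcomp k
  have h0 : k.toNat = 0 := by omega
  rw [h0, Finset.Icc_eq_empty (by norm_num), Finset.sum_empty, add_zero] at h
  exact h

lemma L_low (hcomp : ∀ k : ℤ,
      L.coeff k + ∑ j ∈ Finset.Icc 1 k.toNat, c j * (Linv ^ j).coeff k
        = (HahnSeries.single (-1 : ℤ) (1 : R)).coeff k) :
    ∀ i < (-1 : ℤ), L.coeff i = 0 := fun i hi => by
  rw [L_coeff_le hcomp (by omega), HahnSeries.coeff_single_of_ne (by omega)]

lemma L_neg1 (hcomp : ∀ k : ℤ,
      L.coeff k + ∑ j ∈ Finset.Icc 1 k.toNat, c j * (Linv ^ j).coeff k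
        = (HahnSeries.single (-1 : ℤ) (1 : R)).coeff k) :
    L.coeff (-1) = 1 := by
  rw [L_coeff_le hcomp (by norm_num), HahnSeries.coeff_single_same]

lemma Linv_low (hLinv : L * Linv = 1) (hcomp : ∀ k : ℤ,
      L.coeff k + ∑ j ∈ Finset.Icc 1 k.toNat, c j * (Linv ^ j).coeff k
        = (HahnSeries.single (-1 : ℤ) (1 : R)).coeff k) :
    ∀ k < (1 : ℤ), Linv.coeff k = 0 := by
  by_contra hc
  push_neg at hc
  obtain ⟨k0, hk0, hne⟩ := hc
  set S : Set ℤ := {k | k < 1 ∧ Linv.coeff k ≠ 0} with hSdef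
  have hSsub : S ⊆ Linv.support := fun k hk => hk.2
  have hwf : S.IsWF := Linv.isWF_support.subset hSsub
  have hne' : S.Nonempty := ⟨k0, hk0, hne⟩
  set m := hwf.min hne' with hmdef
  have hmS : m ∈ S := hwf.min_mem hne'
  have h10 : (1 : R) ≠ 0 := by
    intro h
    exact hmS.2 (by
      calc Linv.coeff m = Linv.coeff m * 1 := (mul_one _).symm
        _ = Linv.coeff m * 0 := by rw [h]
        _ = 0 := mul_zero _)
  have key : (L * Linv).coeff (m - 1) = 0 := by
    rw [hLinv, HahnSeries.coeff_one, if_neg (by have := hmS.1; omega)]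
  rw [HahnSeries.coeff_mul] at key
  have hmem : ((-1 : ℤ), m) ∈ Finset.antidiagonal L.isPWO_support Linv.isPWO_support (m - 1) :=
    Finset.mem_addAntidiagonal.mpr
      ⟨(HahnSeries.mem_support _ _).mpr (by rw [L_neg1 hcomp]; exact h10),
       hSsub hmS, by ring⟩
  rw [Finset.sum_eq_single_of_mem _ hmem (fun ij hij hne2 => ?_)] at key
  · rw [L_neg1 hcomp, one_mul] at key
    exact hmS.2 key
  · rw [Finset.mem_addAntidiagonal] at hij
    rcases lt_trichotomy ij.1 (-1 : ℤ) with h | h | h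
    · rw [L_low hcomp _ h, zero_mul]
    · exact absurd (Prod.ext h (by have := hij.2.2; omega)) hne2
    · have hij2 : ij.2 < m := by have := hij.2.2; omega
      have hij2' : ij.2 < 1 := by have := hmS.1; omega
      have : Linv.coeff ij.2 = 0 := by
        by_contra hc2
        exact hwf.not_lt_min hne' ⟨hij2', hc2⟩ hij2
      rw [this, mul_zero]

lemma Linv_one (hLinv : L * Linv = 1) (hcomp : ∀ k : ℤ,
      L.coeff k + ∑ j ∈ Finset.Icc 1 k.toNat, c j * (Linv ^ j).coeff k
        = (HahnSeries.single (-1 : ℤ) (1 : R)).coeff k) :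
    Linv.coeff 1 = 1 := by
  have h := mul_coeff_corner (x := L) (y := Linv) (a := -1) (b := 1)
    (L_low hcomp) (Linv_low hLinv hcomp)
  norm_num [hLinv, L_neg1 hcomp, HahnSeries.coeff_one] at h
  exact h.symm

lemma pow_low {x : HahnSeries ℤ R} {a : ℤ} (hx : ∀ i < a, x.coeff i = 0) (n : ℕ) :
    ∀ i < (n : ℤ) * a, (x ^ n).coeff i = 0 := by
  induction n with
  | zero =>
    intro i hi
    rw [pow_zero, HahnSeries.coeff_one, if_neg]
    intro h
    rw [h] at hi
    simp at hi
  | succ n ih =>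
    intro i hi
    rw [pow_succ]
    exact mul_coeff_eq_zero ih hx (by push_cast at hi ⊢; linarith)

lemma L_pow_low (hcomp : ∀ k : ℤ,
      L.coeff k + ∑ j ∈ Finset.Icc 1 k.toNat, c j * (Linv ^ j).coeff k
        = (HahnSeries.single (-1 : ℤ) (1 : R)).coeff k) (n : ℕ) :
    ∀ i < -(n : ℤ), (L ^ n).coeff i = 0 := by
  intro i hi
  exact pow_low (L_low hcomp) n i (by push_cast; linarith)

lemma Linv_pow_low (hLinv : L * Linv = 1) (hcomp : ∀ k : ℤ,
      L.coeff k + ∑ j ∈ Finset.Icc 1 k.toNat, c j * (Linv ^ j).coeff k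
        = (HahnSeries.single (-1 : ℤ) (1 : R)).coeff k) (j : ℕ) :
    ∀ i < (j : ℤ), (Linv ^ j).coeff i = 0 := by
  intro i hi
  exact pow_low (Linv_low hLinv hcomp) j i (by push_cast; linarith)

lemma Linv_pow_L_pow (hLinv : L * Linv = 1) {j n : ℕ} (hj : j ≤ n) :
    Linv ^ j * L ^ n = L ^ (n - j) := by
  have h : L ^ n = L ^ j * L ^ (n - j) := by
    rw [← _root_.pow_add]
    congr 1
    omega
  rw [h, ← mul_assoc, ← mul_pow, mul_comm Linv L, hLinv, one_pow, one_mul]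

lemma derivL_zero (hcomp : ∀ k : ℤ,
      L.coeff k + ∑ j ∈ Finset.Icc 1 k.toNat, c j * (Linv ^ j).coeff k
        = (HahnSeries.single (-1 : ℤ) (1 : R)).coeff k) :
    (deriv L).coeff 0 = 1 := by
  rw [deriv_coeff]
  norm_num [L_neg1 hcomp]

lemma derivL_low (hcomp : ∀ k : ℤ,
      L.coeff k + ∑ j ∈ Finset.Icc 1 k.toNat, c j * (Linv ^ j).coeff k
        = (HahnSeries.single (-1 : ℤ) (1 : R)).coeff k) :
    ∀ k < (0 : ℤ), (deriv L).coeff k = 0 := by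
  intro k hk
  rw [deriv_coeff, L_low hcomp _ (by omega), smul_zero, neg_zero]

lemma derivLinv (hLinv : L * Linv = 1) : deriv Linv = -(Linv ^ 2 * deriv L) := by
  have key : deriv L * Linv + L * deriv Linv = 0 := by
    rw [← deriv_mul, hLinv, deriv_one]
  have h2 : L * deriv Linv = -(deriv L * Linv) := eq_neg_of_add_eq_zero_left (by linear_combination key)
  calc deriv Linv = (Linv * L) * deriv Linv := by rw [mul_comm Linv L, hLinv, one_mul]
    _ = Linv * (L * deriv Linv) := by ring
    _ = Linv * -(deriv L * Linv) := by rw [h2]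
    _ = -(Linv ^ 2 * deriv L) := by ring

lemma deriv_Linv_pow (hLinv : L * Linv = 1) {j : ℕ} (hj : 1 ≤ j) :
    deriv (Linv ^ j) = -(j • (Linv ^ (j + 1) * deriv L)) := by
  obtain ⟨i, rfl⟩ : ∃ i, j = i + 1 := ⟨j - 1, by omega⟩
  rw [deriv_pow, derivLinv hLinv]
  have h : Linv ^ i * -(Linv ^ 2 * deriv L) = -(Linv ^ (i + 1 + 1) * deriv L) := by ring
  rw [h]
  ext k
  rw [nsmul_coeff, HahnSeries.coeff_neg, HahnSeries.coeff_neg, nsmul_coeff, neg_nsmul]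

lemma res_pow (m : ℕ) : (L ^ m * deriv L).coeff 1 = 0 := by
  have h := congrArg (fun x : HahnSeries ℤ R => x.coeff 1) (deriv_pow L m)
  rw [deriv_coeff_one, nsmul_coeff] at h
  exact nsmul_cancel (by omega) h.symm

lemma residue (hLinv : L * Linv = 1) (hcomp : ∀ k : ℤ,
      L.coeff k + ∑ j ∈ Finset.Icc 1 k.toNat, c j * (Linv ^ j).coeff k
        = (HahnSeries.single (-1 : ℤ) (1 : R)).coeff k) {n : ℕ} (hn : 1 ≤ n) :
    (L ^ n).coeff 1 = -(n • c n) := by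
  set S : HahnSeries ℤ R := ∑ j ∈ Finset.Icc 1 n,
    j • (HahnSeries.single (0 : ℤ) (c j) * (Linv ^ (j + 1) * deriv L)) with hS
  have hterm0 : ∀ (j : ℕ) (k : ℤ), 1 ≤ j → k < (j : ℤ) + 1 →
      (j • (HahnSeries.single (0 : ℤ) (c j) * (Linv ^ (j + 1) * deriv L))).coeff k = 0 := by
    intro j k hj hk
    rw [nsmul_coeff, HahnSeries.coeff_single_zero_mul,
      mul_coeff_eq_zero (Linv_pow_low hLinv hcomp (j + 1)) (derivL_low hcomp)
        (by push_cast; linarith), mul_zero, smul_zero]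
  have hg : ∀ k ≤ (n : ℤ) + 1, (deriv L - 1 - S).coeff k = 0 := by
    intro k hk
    have hL' : L.coeff (k - 1) = (HahnSeries.single (-1 : ℤ) (1 : R)).coeff (k - 1)
        - ∑ j ∈ Finset.Icc 1 (k - 1).toNat, c j * (Linv ^ j).coeff (k - 1) :=
      eq_sub_of_add_eq (hcomp (k - 1))
    have hsingle : -((k - 1) • (HahnSeries.single (-1 : ℤ) (1 : R)).coeff (k - 1))
        = (1 : HahnSeries ℤ R).coeff k := by
      rcases eq_or_ne k 0 with rfl | hk0
      · rw [HahnSeries.coeff_one, if_pos rfl]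
        norm_num [HahnSeries.coeff_single_same]
      · rw [HahnSeries.coeff_single_of_ne (by omega : k - 1 ≠ -1), smul_zero, neg_zero,
          HahnSeries.coeff_one, if_neg hk0]
    have hterm : ∀ j ∈ Finset.Icc 1 (k - 1).toNat, (k - 1) • (c j * (Linv ^ j).coeff (k - 1))
        = (j • (HahnSeries.single (0 : ℤ) (c j) * (Linv ^ (j + 1) * deriv L))).coeff k := by
      intro j hj
      rw [Finset.mem_Icc] at hj
      have hd := congrArg (fun x : HahnSeries ℤ R => x.coeff k) (deriv_Linv_pow hLinv hj.1)
      rw [deriv_coeff, HahnSeries.coeff_neg, nsmul_coeff, neg_inj] at hd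
      rw [nsmul_coeff, HahnSeries.coeff_single_zero_mul, ← mul_smul_comm, hd, mul_smul_comm]
    have hsub : Finset.Icc 1 (k - 1).toNat ⊆ Finset.Icc 1 n :=
      Finset.Icc_subset_Icc_right (by omega)
    have main : -((k - 1) • L.coeff (k - 1)) = (1 : HahnSeries ℤ R).coeff k + S.coeff k := by
      calc -((k - 1) • L.coeff (k - 1))
          = (k - 1) • (∑ j ∈ Finset.Icc 1 (k - 1).toNat, c j * (Linv ^ j).coeff (k - 1))
            + -((k - 1) • (HahnSeries.single (-1 : ℤ) (1 : R)).coeff (k - 1)) := by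
            rw [hL', smul_sub]; ring
        _ = (∑ j ∈ Finset.Icc 1 (k - 1).toNat,
              (j • (HahnSeries.single (0 : ℤ) (c j) * (Linv ^ (j + 1) * deriv L))).coeff k)
            + (1 : HahnSeries ℤ R).coeff k := by
            rw [Finset.smul_sum, Finset.sum_congr rfl hterm, hsingle]
        _ = (∑ j ∈ Finset.Icc 1 n,
              (j • (HahnSeries.single (0 : ℤ) (c j) * (Linv ^ (j + 1) * deriv L))).coeff k)
            + (1 : HahnSeries ℤ R).coeff k := by
            rw [Finset.sum_subset hsub (fun j hj hj2 => ?_)]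
            refine hterm0 j k ?_ ?_
            · exact (Finset.mem_Icc.mp hj).1
            · simp only [Finset.mem_Icc] at hj hj2; omega
        _ = (1 : HahnSeries ℤ R).coeff k + S.coeff k := by
            rw [hS, coeff_sum]; ring
    rw [HahnSeries.coeff_sub, HahnSeries.coeff_sub, deriv_coeff, main]
    ring
  have hLn : (L ^ n).coeff 1 = (L ^ n * deriv L).coeff 1 - (L ^ n * S).coeff 1
      - (L ^ n * (deriv L - 1 - S)).coeff 1 := by
    have h : L ^ n = L ^ n * deriv L - L ^ n * S - L ^ n * (deriv L - 1 - S) := by ring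
    rw [← HahnSeries.coeff_sub, ← HahnSeries.coeff_sub, ← h]
  have hzero2 : (L ^ n * (deriv L - 1 - S)).coeff 1 = 0 :=
    mul_coeff_eq_zero (a := -(n : ℤ)) (b := (n : ℤ) + 2) (L_pow_low hcomp n)
      (fun i hi => hg i (by omega)) (by omega)
  have hLS : (L ^ n * S).coeff 1 = n • c n := by
    rw [hS, Finset.mul_sum, coeff_sum]
    have hterm2 : ∀ j ∈ Finset.Icc 1 n,
        (L ^ n * (j • (HahnSeries.single (0 : ℤ) (c j) * (Linv ^ (j + 1) * deriv L)))).coeff 1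
        = if j = n then n • c n else 0 := by
      intro j hj
      rw [Finset.mem_Icc] at hj
      have hre : L ^ n * (j • (HahnSeries.single (0 : ℤ) (c j) * (Linv ^ (j + 1) * deriv L)))
          = j • (HahnSeries.single (0 : ℤ) (c j) * ((Linv ^ (j + 1) * L ^ n) * deriv L)) := by
        rw [mul_smul_comm]
        congr 1
        ring
      rw [hre, nsmul_coeff, HahnSeries.coeff_single_zero_mul]
      rcases eq_or_ne j n with rfl | hne
      · have hinv : Linv ^ (j + 1) * L ^ j = Linv := by
          rw [pow_succ, mul_comm (Linv ^ j) Linv, mul_assoc, Linv_pow_L_pow hLinv le_rfl,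
            Nat.sub_self, pow_zero, mul_one]
        rw [if_pos rfl, hinv]
        have hcor := mul_coeff_corner (x := Linv) (y := deriv L) (a := 1) (b := 0)
          (Linv_low hLinv hcomp) (derivL_low hcomp)
        norm_num [Linv_one hLinv hcomp, derivL_zero hcomp] at hcor
        rw [hcor, mul_one]
      · rw [if_neg hne, Linv_pow_L_pow hLinv (by omega : j + 1 ≤ n), res_pow, mul_zero,
          smul_zero]
    rw [Finset.sum_congr rfl hterm2, Finset.sum_ite_eq' (Finset.Icc 1 n) n,
      if_pos (Finset.mem_Icc.mpr ⟨hn, le_rfl⟩)]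
  rw [hLn, hLS, res_pow, hzero2]
  ring

lemma w_mul_coeff (x : HahnSeries ℤ R) (k : ℤ) :
    (HahnSeries.single (-1 : ℤ) (1 : R) * x).coeff k = x.coeff (k + 1) := by
  have h : k = (k + 1) + (-1) := by ring
  conv_lhs => rw [h]
  rw [HahnSeries.coeff_single_mul_add, one_mul]

lemma ev_coeff_pos (P : Polynomial R) {k : ℤ} (hk : 0 < k) :
    (Polynomial.eval₂ (HahnSeries.C : R →+* HahnSeries ℤ R)
      (HahnSeries.single (-1 : ℤ) (1 : R)) P).coeff k = 0 := by
  induction P using Polynomial.induction_on' with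
  | add p q hp hq => rw [Polynomial.eval₂_add, HahnSeries.coeff_add, hp, hq, add_zero]
  | monomial d r =>
    rw [Polynomial.eval₂_monomial]
    have hw : (HahnSeries.single (-1 : ℤ) (1 : R)) ^ d = HahnSeries.single (-(d : ℤ)) (1 : R) := by
      rw [HahnSeries.single_pow]
      congr 1
      · simp
      · simp
    rw [hw, HahnSeries.C_apply, HahnSeries.single_mul_single, zero_add, mul_one]
    exact HahnSeries.coeff_single_of_ne (by omega)

lemma step_rec (hLinv : L * Linv = 1) (hcomp : ∀ k : ℤ,
      L.coeff k + ∑ j ∈ Finset.Icc 1 k.toNat, c j * (Linv ^ j).coeff k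
        = (HahnSeries.single (-1 : ℤ) (1 : R)).coeff k) {n : ℕ} {k : ℤ} (hk : k ≤ 0) :
    (L ^ (n + 1)).coeff k = (HahnSeries.single (-1 : ℤ) (1 : R) * L ^ n).coeff k
      - ∑ j ∈ Finset.Icc 1 n, c j * (L ^ (n - j)).coeff k := by
  set M : HahnSeries ℤ R := HahnSeries.single (-1 : ℤ) (1 : R)
    - ∑ j ∈ Finset.Icc 1 n, HahnSeries.single (0 : ℤ) (c j) * Linv ^ j with hM
  have hLM : ∀ i ≤ (n : ℤ), (L - M).coeff i = 0 := by
    intro i hi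
    rw [HahnSeries.coeff_sub, hM, HahnSeries.coeff_sub, coeff_sum]
    have h := hcomp i
    have hsub : Finset.Icc 1 i.toNat ⊆ Finset.Icc 1 n := Finset.Icc_subset_Icc_right (by omega)
    have hext : ∑ j ∈ Finset.Icc 1 i.toNat, c j * (Linv ^ j).coeff i
        = ∑ j ∈ Finset.Icc 1 n, (HahnSeries.single (0 : ℤ) (c j) * Linv ^ j).coeff i := by
      rw [Finset.sum_congr rfl
        (fun j hj => (HahnSeries.coeff_single_zero_mul (r := c j) (x := Linv ^ j)).symm),
        Finset.sum_subset hsub (fun j hj hj2 => ?_)]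
      rw [HahnSeries.coeff_single_zero_mul,
        Linv_pow_low hLinv hcomp j i (by simp only [Finset.mem_Icc] at hj hj2; omega), mul_zero]
    rw [← hext]
    linear_combination h
  have hsplit : L ^ (n + 1) = M * L ^ n + (L - M) * L ^ n := by
    rw [pow_succ]
    ring
  rw [hsplit, HahnSeries.coeff_add,
    mul_coeff_eq_zero (a := (n : ℤ) + 1) (b := -(n : ℤ)) (fun i hi => hLM i (by omega))
      (L_pow_low hcomp n) (by omega), add_zero, hM, sub_mul, HahnSeries.coeff_sub,
    Finset.sum_mul, coeff_sum]
  congr 1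
  refine Finset.sum_congr rfl fun j hj => ?_
  rw [Finset.mem_Icc] at hj
  rw [mul_assoc, Linv_pow_L_pow hLinv hj.2, HahnSeries.coeff_single_zero_mul]

end Hahn

end FaberAux

theorem stmt10 {R : Type*} [CommRing R] [Algebra ℚ R] (c : ℕ → R) (Φ : ℕ → Polynomial R)
    (hΦ : FaberRel c Φ) (a : ℕ → R) (L Linv : HahnSeries ℤ R)
    (hL : L = HahnSeries.single (-1 : ℤ) 1 +
      HahnSeries.ofPowerSeries ℤ R (PowerSeries.mk fun j => if j = 0 then 0 else a j))
    (hLinv : L * Linv = 1)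
    (hcomp : ∀ k : ℤ,
      L.coeff k + ∑ j ∈ Finset.Icc 1 k.toNat, c j * (Linv ^ j).coeff k
        = (HahnSeries.single (-1 : ℤ) (1 : R)).coeff k) :
    ∀ n, 1 ≤ n → ∀ k : ℤ, k ≤ 0 →
      (L ^ n - Polynomial.eval₂ (HahnSeries.C : R →+* HahnSeries ℤ R)
          (HahnSeries.single (-1 : ℤ) (1 : R)) (Φ n)).coeff k = 0 := by
  suffices H : ∀ n, 1 ≤ n → ∀ k : ℤ, k ≤ 0 →
      (L ^ n).coeff k = (Polynomial.eval₂ (HahnSeries.C : R →+* HahnSeries ℤ R)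
        (HahnSeries.single (-1 : ℤ) (1 : R)) (Φ n)).coeff k by
    intro n hn k hk
    rw [HahnSeries.coeff_sub, H n hn k hk, sub_self]
  intro n
  induction n using Nat.strong_induction_on with
  | _ n IH =>
    intro hn k hk
    match n, hn with
    | 1, _ => rw [pow_one, FaberAux.faber_one hΦ, Polynomial.eval₂_X,
        FaberAux.L_coeff_le hcomp hk]
    | (m + 2), _ =>
      have hm : 1 ≤ m + 1 := by omega
      rw [show m + 2 = (m + 1) + 1 from rfl, FaberAux.step_rec hLinv hcomp hk]
      have hrec := FaberAux.faber_rec hΦ (m + 1) hm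
      have hrec' : Φ (m + 1 + 1) = Polynomial.X * Φ (m + 1)
          - (∑ j ∈ Finset.Icc 1 m, Polynomial.C (c j) * Φ (m + 1 - j))
          - Polynomial.C ((m + 1 + 1) • c (m + 1)) := by
        rw [hrec, map_nsmul]
        simp
      rw [hrec', Polynomial.eval₂_sub, Polynomial.eval₂_sub, Polynomial.eval₂_mul,
        Polynomial.eval₂_X, Polynomial.eval₂_C, Polynomial.eval₂_finset_sum]
      have hevsum : ∀ j ∈ Finset.Icc 1 m,
          Polynomial.eval₂ (HahnSeries.C : R →+* HahnSeries ℤ R)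
            (HahnSeries.single (-1 : ℤ) (1 : R)) (Polynomial.C (c j) * Φ (m + 1 - j))
          = HahnSeries.single (0 : ℤ) (c j) * Polynomial.eval₂
              (HahnSeries.C : R →+* HahnSeries ℤ R)
              (HahnSeries.single (-1 : ℤ) (1 : R)) (Φ (m + 1 - j)) := by
        intro j hj
        rw [Polynomial.eval₂_mul, Polynomial.eval₂_C, HahnSeries.C_apply]
      rw [Finset.sum_congr rfl hevsum, HahnSeries.coeff_sub, HahnSeries.coeff_sub,
        FaberAux.coeff_sum]
      have hIH : ∀ j ∈ Finset.Icc 1 m,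
          c j * (L ^ (m + 1 - j)).coeff k
            = (HahnSeries.single (0 : ℤ) (c j) * Polynomial.eval₂
                (HahnSeries.C : R →+* HahnSeries ℤ R)
                (HahnSeries.single (-1 : ℤ) (1 : R)) (Φ (m + 1 - j))).coeff k := by
        intro j hj
        rw [Finset.mem_Icc] at hj
        rw [HahnSeries.coeff_single_zero_mul, IH (m + 1 - j) (by omega) (by omega) k hk]
      rw [Finset.sum_Icc_succ_top hm, Finset.sum_congr rfl hIH, Nat.sub_self, pow_zero]
      rcases eq_or_ne k 0 with rfl | hk0
      · rw [FaberAux.w_mul_coeff, FaberAux.w_mul_coeff, zero_add,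
          FaberAux.residue hLinv hcomp hm,
          FaberAux.ev_coeff_pos (Φ (m + 1)) (by norm_num : (0 : ℤ) < 1),
          HahnSeries.coeff_one, if_pos rfl, HahnSeries.C_apply, HahnSeries.coeff_single_same,
          succ_nsmul]
        ring
      · rw [FaberAux.w_mul_coeff, FaberAux.w_mul_coeff,
          IH (m + 1) (by omega) hm (k + 1) (by omega),
          HahnSeries.coeff_one, if_neg hk0, HahnSeries.C_apply,
          HahnSeries.coeff_single_of_ne hk0, mul_zero]
        ring
end
end
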